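/- arXiv:2409.03020 — 7 statements merged into one kernel-verified Lean document; each statement's English description precedes it below -/
import Mathlib

section
/- Let D be a positive integer, let a, q ∈ ℝ^D with a_d > 0 and q_d > 0 for all d, and let g : ℝ → ℝ be concave, nondecreasing and continuous. Assume the coordinates are sorted so that a_1/q_1 ≥ a_2/q_2 ≥ … ≥ a_D/q_D. Then there exists a point x* in the box [0,1]^D that maximizes x ↦ g(∑_{d} a_d x_d) − ∑_d q_d x_d over [0,1]^D and is of greedy prefix form: there is an index k such that x*_d = 1 for all d < k and x*_d = 0 for all d > k. -/
/-!
Moving `a`-mass `t` from a coordinate `j` to a coordinate `i` (`x i += t / a i`,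
`x j -= t / a j`) leaves `∑ a x`, hence the `g`-term, unchanged and changes the cost by
`t * (q i / a i - q j / a j)`, which is `≤ 0` when `i < j` by the sorting. A maximizer that
minimizes the potential `∑ d * a d * x d` among all maximizers therefore admits no such move
with `i < j`: `x i = 1` or `x j = 0`, which is the prefix form.
-/

open Finset

section Transfer

variable {ι : Type*} [DecidableEq ι]

noncomputable def transfer (a x : ι → ℝ) (i j : ι) (t : ℝ) : ι → ℝ :=
  x + Pi.single i (t / a i) - Pi.single j (t / a j)

lemma sum_mul_transfer [Fintype ι] (a c x : ι → ℝ) (i j : ι) (t : ℝ) :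
    ∑ d, c d * transfer a x i j t d = ∑ d, c d * x d + t * (c i / a i - c j / a j) := by
  simp only [transfer, Pi.add_apply, Pi.sub_apply, mul_add, mul_sub, sum_add_distrib,
    sum_sub_distrib, Pi.single_apply, mul_ite, mul_zero, sum_ite_eq', mem_univ, if_true]
  ring

lemma transfer_mem_Icc {a x : ι → ℝ} {i j : ι} {t : ℝ} (hij : i ≠ j) (hai : 0 < a i)
    (haj : 0 < a j) (hx : x ∈ Set.Icc 0 1) (ht : 0 ≤ t) (hti : t ≤ a i * (1 - x i))
    (htj : t ≤ a j * x j) : transfer a x i j t ∈ Set.Icc 0 1 := by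
  have hi : t / a i ≤ 1 - x i := (div_le_iff₀' hai).2 hti
  have hj : t / a j ≤ x j := (div_le_iff₀' haj).2 htj
  have hi₀ := div_nonneg ht hai.le
  have hj₀ := div_nonneg ht haj.le
  refine ⟨fun d => ?_, fun d => ?_⟩ <;> have h₀ := hx.1 d <;> have h₁ := hx.2 d <;>
    rcases eq_or_ne d i with rfl | hdi <;> rcases eq_or_ne d j with rfl | hdj <;>
    simp_all [transfer] <;> linarith

lemma exists_forward_transfer [Fintype ι] {a q w x : ι → ℝ} {i j : ι} (hij : i ≠ j)
    (hai : 0 < a i) (haj : 0 < a j) (hqi : 0 < q i) (hqj : 0 < q j)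
    (hratio : a j / q j ≤ a i / q i) (hw : w i < w j) (hx : x ∈ Set.Icc 0 1)
    (hxi : x i < 1) (hxj : 0 < x j) :
    ∃ z ∈ Set.Icc (0 : ι → ℝ) 1, ∑ d, a d * z d = ∑ d, a d * x d ∧
      ∑ d, q d * z d ≤ ∑ d, q d * x d ∧
      ∑ d, w d * a d * z d < ∑ d, w d * a d * x d := by
  set t := min (a i * (1 - x i)) (a j * x j)
  have ht : 0 < t := lt_min (by nlinarith) (by positivity)
  refine ⟨transfer a x i j t, transfer_mem_Icc hij hai haj hx ht.le (min_le_left _ _)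
    (min_le_right _ _), ?_, ?_, ?_⟩ <;> rw [sum_mul_transfer]
  · simp [hai.ne', haj.ne']
  · have : q i / a i ≤ q j / a j := by
      rw [div_le_div_iff₀ hqj hqi] at hratio
      rw [div_le_div_iff₀ hai haj]
      linarith
    nlinarith
  · rw [mul_div_cancel_right₀ _ hai.ne', mul_div_cancel_right₀ _ haj.ne']
    nlinarith

end Transfer

theorem IsCompact.exists_isMaxOn_and_le_of_isMaxOn {α : Type*} [TopologicalSpace α]
    {K : Set α} (hK : IsCompact K) (hne : K.Nonempty) {f φ : α → ℝ} (hf : Continuous f)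
    (hφ : Continuous φ) :
    ∃ x ∈ K, IsMaxOn f K x ∧ ∀ z ∈ K, IsMaxOn f K z → φ x ≤ φ z := by
  obtain ⟨y, hy, hymax⟩ := hK.exists_isMaxOn hne hf.continuousOn
  obtain ⟨x, ⟨hxK, hyx⟩, hxmin⟩ :=
    (hK.inter_right (isClosed_le continuous_const hf)).exists_isMinOn
      ⟨y, hy, le_rfl (a := f y)⟩ hφ.continuousOn
  exact ⟨x, hxK, fun w hw => show f w ≤ f x from (hymax hw).trans hyx,
    fun z hz hzmax => hxmin ⟨hz, hzmax hy⟩⟩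

lemma exists_prefix_of_forall_lt {ι : Type*} [Fintype ι] [LinearOrder ι] [Nonempty ι]
    {x : ι → ℝ} (h : ∀ i j, i < j → x i = 1 ∨ x j = 0) :
    ∃ k, (∀ d, d < k → x d = 1) ∧ (∀ d, k < d → x d = 0) := by
  by_cases hall : ∀ d, x d = 1
  · obtain ⟨k, -, hk⟩ := univ.exists_max_image id (univ_nonempty (α := ι))
    exact ⟨k, fun d _ => hall d, fun d hd => absurd (hk d (mem_univ d)) (not_le.2 hd)⟩
  push Not at hall
  obtain ⟨k, hk, hkmin⟩ := (univ.filter fun d => x d ≠ 1).exists_min_image id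
    (by simpa [Finset.Nonempty] using hall)
  refine ⟨k, fun d hd => ?_, fun d hd => (h k d hd).resolve_left (by simpa using hk)⟩
  by_contra hxd
  exact absurd (hkmin d (by simpa using hxd)) (not_le.2 hd)

theorem greedy_prefix_maximizer_general
    (D : ℕ) (hD : 0 < D)
    (a q : Fin D → ℝ)
    (ha : ∀ d, 0 < a d) (hq : ∀ d, 0 < q d)
    (g : ℝ → ℝ)
    (hgcont : Continuous g)
    (hsorted : ∀ i j : Fin D, i ≤ j → a j / q j ≤ a i / q i) :
    ∃ x ∈ Set.Icc (0 : Fin D → ℝ) 1,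
      (∀ y ∈ Set.Icc (0 : Fin D → ℝ) 1,
        g (∑ d, a d * y d) - ∑ d, q d * y d ≤ g (∑ d, a d * x d) - ∑ d, q d * x d) ∧
      ∃ k : Fin D, (∀ d, d < k → x d = 1) ∧ (∀ d, k < d → x d = 0) := by
  have : Nonempty (Fin D) := ⟨⟨0, hD⟩⟩
  set f : (Fin D → ℝ) → ℝ := fun y => g (∑ d, a d * y d) - ∑ d, q d * y d
  obtain ⟨x, hx, hmax, hmin⟩ := isCompact_Icc.exists_isMaxOn_and_le_of_isMaxOn
    (Set.nonempty_Icc.2 zero_le_one) (f := f)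
    (φ := fun y => ∑ d : Fin D, (d.val : ℝ) * a d * y d) (by fun_prop) (by fun_prop)
  have hprefix : ∀ i j, i < j → x i = 1 ∨ x j = 0 := by
    intro i j hij
    by_contra! h
    obtain ⟨z, hz, hza, hzq, hzw⟩ := exists_forward_transfer hij.ne (ha i) (ha j) (hq i) (hq j)
      (hsorted i j hij.le) (w := fun d => (d.val : ℝ)) (Nat.cast_lt.2 hij) hx
      (lt_of_le_of_ne (hx.2 i) h.1) (lt_of_le_of_ne' (hx.1 j) h.2)
    have hfz : f x ≤ f z := by simp only [f, hza]; linarith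
    have hzmax : IsMaxOn f _ z := fun y hy => (hmax hy).trans hfz
    exact (hmin z hz hzmax).not_gt hzw
  exact ⟨x, hx, fun y hy => hmax hy, exists_prefix_of_forall_lt hprefix⟩

/-- For a concave, nondecreasing, continuous `g`, positive coefficients `a` and
positive prices `q` sorted so that `a 1 / q 1 ≥ a 2 / q 2 ≥ …`, the quasi-linear objective
`x ↦ g (∑ d, a d * x d) - ∑ d, q d * x d` has a maximizer over the box `[0,1]^D`
of greedy prefix form. -/
theorem greedy_prefix_maximizer
    (D : ℕ) (hD : 0 < D)
    (a q : Fin D → ℝ)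
    (ha : ∀ d, 0 < a d) (hq : ∀ d, 0 < q d)
    (g : ℝ → ℝ)
    (hgconc : ConcaveOn ℝ Set.univ g)
    (hgmono : Monotone g)
    (hgcont : Continuous g)
    (hsorted : ∀ i j : Fin D, i ≤ j → a j / q j ≤ a i / q i) :
    ∃ x ∈ Set.Icc (0 : Fin D → ℝ) 1,
      (∀ y ∈ Set.Icc (0 : Fin D → ℝ) 1,
        g (∑ d, a d * y d) - ∑ d, q d * y d ≤ g (∑ d, a d * x d) - ∑ d, q d * x d) ∧
      ∃ k : Fin D, (∀ d, d < k → x d = 1) ∧ (∀ d, k < d → x d = 0) :=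
  greedy_prefix_maximizer_general D hD a q ha hq g hgcont hsorted
end

section
/- Let D be a positive integer, let a ∈ ℝ^D with a_d > 0, let g : ℝ → ℝ be concave, nondecreasing and continuous, and set u(x) = g(∑_d a_d x_d). Let q, q' ∈ ℝ^D with q_d > 0 for all d, and suppose q' differs from q only in one coordinate e, where q'_e ≥ q_e. Then there exist x ∈ 𝒟(u,q) and x' ∈ 𝒟(u,q') such that x'_i ≥ x_i for every coordinate i ≠ e. -/
/-- The demand set `𝒟(u, q)`: maximizers of the quasi-linear utility
`x ↦ u x - q·x` over the box `[0,1]^D`. -/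
def demandSet {D : ℕ} (u : (Fin D → ℝ) → ℝ) (q : Fin D → ℝ) : Set (Fin D → ℝ) :=
  {x | x ∈ Set.Icc (0 : Fin D → ℝ) 1 ∧
    ∀ y ∈ Set.Icc (0 : Fin D → ℝ) 1,
      u y - ∑ d, q d * y d ≤ u x - ∑ d, q d * x d}

/-!
Fix `x ∈ 𝒟(u,q)` and let `x' ∈ 𝒟(u,q')` be a demanded bundle closest to `x` in ℓ¹ distance.
If `x'_j < x_j` for some `j ≠ e`, there is a step `v` from `x'` towards `x` with `v_j ≠ 0` such
that `x' + v` is still demanded at `q'`, contradicting the choice of `x'`. Exchange argument: the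
gain of `x'` from the step `v` at prices `q'` is at least the loss of `x` from the opposite step
`-v` at prices `q`, which is nonnegative because `x` is demanded.

If `a·x' < a·x` the step raises coordinate `j` alone: by concavity of `g`, raising the smaller
aggregate `a·x'` gains at least what lowering `a·x` by the same amount loses. Otherwise some `k`
has `x_k < x'_k`, and the step shifts weight from `k` to `j` keeping `a·x'` fixed; since only the
price of `e` rose and the step does not raise coordinate `e`, it costs no more at `q'` than at `q`.
-/

open Set Matrix

theorem ConcaveOn.add_le_add_map_inward {g : ℝ → ℝ} (hg : ConcaveOn ℝ univ g) {s t δ : ℝ}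
    (hδ : 0 ≤ δ) (hδts : δ ≤ s - t) : g t + g s ≤ g (t + δ) + g (s - δ) := by
  rcases hδ.eq_or_lt with rfl | hδ
  · simp
  set μ := δ / (s - t)
  have hμ : μ * (s - t) = δ := div_mul_cancel₀ δ (by linarith)
  have hμ0 : 0 ≤ μ := div_nonneg hδ.le (by linarith)
  have hμ1 : μ ≤ 1 := div_le_one_of_le₀ hδts (by linarith)
  have h₁ := hg.2 (mem_univ t) (mem_univ s) (sub_nonneg.2 hμ1) hμ0 (sub_add_cancel 1 μ)
  have h₂ := hg.2 (mem_univ t) (mem_univ s) hμ0 (sub_nonneg.2 hμ1) (add_sub_cancel μ 1)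
  simp only [smul_eq_mul] at h₁ h₂
  rw [show (1 - μ) * t + μ * s = t + δ by rw [← hμ]; ring] at h₁
  rw [show μ * t + (1 - μ) * s = s - δ by rw [← hμ]; ring] at h₂
  linarith

theorem add_mem_uIcc_of_mem_uIcc_sub {s t w : ℝ} (hw : w ∈ uIcc 0 (t - s)) :
    s + w ∈ uIcc s t ∧ t - w ∈ uIcc s t := by
  simp only [mem_uIcc] at hw ⊢
  rcases hw with ⟨h₁, h₂⟩ | ⟨h₁, h₂⟩
  · exact ⟨.inl ⟨by linarith, by linarith⟩, .inl ⟨by linarith, by linarith⟩⟩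
  · exact ⟨.inr ⟨by linarith, by linarith⟩, .inr ⟨by linarith, by linarith⟩⟩

theorem abs_add_sub_of_mem_uIcc_sub {s t w : ℝ} (hw : w ∈ uIcc 0 (t - s)) :
    |s + w - t| = |s - t| - |w| := by
  rcases mem_uIcc.1 hw with ⟨h₁, h₂⟩ | ⟨h₁, h₂⟩
  · rw [abs_of_nonpos (by linarith), abs_of_nonpos (by linarith), abs_of_nonneg h₁]; ring
  · rw [abs_of_nonneg (by linarith), abs_of_nonneg (by linarith), abs_of_nonpos h₂]; ring

section Demand

variable {D : ℕ} {u : (Fin D → ℝ) → ℝ} {q q' x x' v : Fin D → ℝ}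

theorem mem_demandSet_iff :
    x ∈ demandSet u q ↔ x ∈ Icc 0 1 ∧ ∀ y ∈ Icc 0 1, u y - q ⬝ᵥ y ≤ u x - q ⬝ᵥ x :=
  Iff.rfl

theorem demandSet_eq_inter_iInter :
    demandSet u q = Icc 0 1 ∩ ⋂ y ∈ Icc (0 : Fin D → ℝ) 1, {x | u y - q ⬝ᵥ y ≤ u x - q ⬝ᵥ x} := by
  ext x
  simp only [mem_demandSet_iff, mem_inter_iff, mem_iInter, mem_ofPred_eq]

theorem isCompact_demandSet (hu : Continuous u) (q : Fin D → ℝ) : IsCompact (demandSet u q) := by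
  refine isCompact_Icc.of_isClosed_subset ?_ fun x hx => hx.1
  rw [demandSet_eq_inter_iInter]
  exact isClosed_Icc.inter (isClosed_biInter fun y _ => isClosed_le continuous_const (by fun_prop))

theorem demandSet_nonempty (hu : Continuous u) (q : Fin D → ℝ) : (demandSet u q).Nonempty := by
  obtain ⟨x, hx, hmax⟩ := isCompact_Icc.exists_isMaxOn (nonempty_Icc.2 zero_le_one)
    (f := fun y => u y - q ⬝ᵥ y) (by fun_prop)
  exact ⟨x, hx, fun y hy => hmax hy⟩

theorem add_mem_demandSet_of_exchange (hx : x ∈ demandSet u q) (hx' : x' ∈ demandSet u q')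
    (hxv : x - v ∈ Icc 0 1) (hx'v : x' + v ∈ Icc 0 1)
    (hu : u x - u (x - v) ≤ u (x' + v) - u x') (hq : q' ⬝ᵥ v ≤ q ⬝ᵥ v) :
    x' + v ∈ demandSet u q' := by
  rw [mem_demandSet_iff] at hx hx' ⊢
  refine ⟨hx'v, fun y hy => (hx'.2 y hy).trans ?_⟩
  have hloss := hx.2 _ hxv
  rw [dotProduct_sub] at hloss
  rw [dotProduct_add]
  linarith

end Demand

section Step

variable {ι : Type*} {x x' v : ι → ℝ}

def IsStepToward (x' x v : ι → ℝ) : Prop :=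
  ∀ d, v d ∈ uIcc 0 (x d - x' d)

theorem add_mem_Icc_of_step (hx : x ∈ Icc 0 1) (hx' : x' ∈ Icc 0 1)
    (hv : IsStepToward x' x v) : x' + v ∈ Icc 0 1 ∧ x - v ∈ Icc 0 1 := by
  simp only [← pi_univ_Icc, mem_univ_pi, Pi.zero_apply, Pi.one_apply, Pi.add_apply,
    Pi.sub_apply] at hx hx' ⊢
  have hbox d : uIcc (x' d) (x d) ⊆ Icc 0 1 := uIcc_subset_Icc (hx' d) (hx d)
  exact ⟨fun d => hbox d (add_mem_uIcc_of_mem_uIcc_sub (hv d)).1,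
    fun d => hbox d (add_mem_uIcc_of_mem_uIcc_sub (hv d)).2⟩

theorem sum_abs_sub_lt_of_step [Fintype ι] (hv : IsStepToward x' x v) {j : ι} (hvj : v j ≠ 0) :
    ∑ d, |(x' + v) d - x d| < ∑ d, |x' d - x d| := by
  refine Finset.sum_lt_sum (fun d _ => ?_) ⟨j, Finset.mem_univ j, ?_⟩
  · rw [Pi.add_apply, abs_add_sub_of_mem_uIcc_sub (hv d)]
    linarith [abs_nonneg (v d)]
  · rw [Pi.add_apply, abs_add_sub_of_mem_uIcc_sub (hv j)]
    linarith [abs_pos.2 hvj]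

end Step

section Aggregate

variable {D : ℕ} {g : ℝ → ℝ} {a q q' x x' : Fin D → ℝ}

theorem exists_step_of_dotProduct_lt (hg : ConcaveOn ℝ univ g)
    (hx : x ∈ demandSet (fun y => g (a ⬝ᵥ y)) q) (hx' : x' ∈ demandSet (fun y => g (a ⬝ᵥ y)) q')
    {j : Fin D} (haj : 0 < a j) (hqj : q' j ≤ q j) (hj : x' j < x j) (hS : a ⬝ᵥ x' < a ⬝ᵥ x) :
    ∃ v, IsStepToward x' x v ∧ v j ≠ 0 ∧ x' + v ∈ demandSet (fun y => g (a ⬝ᵥ y)) q' := by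
  set τ := min (x j - x' j) ((a ⬝ᵥ x - a ⬝ᵥ x') / a j)
  have hτ : 0 < τ := lt_min (by linarith) (div_pos (by linarith) haj)
  have hτS : a j * τ ≤ a ⬝ᵥ x - a ⬝ᵥ x' :=
    (le_div_iff₀' haj).1 (min_le_right _ _)
  have hv : IsStepToward x' x (Pi.single j τ) := by
    intro d
    rcases eq_or_ne d j with rfl | hd
    · simpa using (mem_uIcc.2 (.inl ⟨hτ.le, min_le_left _ _⟩) : τ ∈ uIcc 0 (x d - x' d))
    · simp [hd]
  refine ⟨_, hv, by simpa using hτ.ne', ?_⟩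
  obtain ⟨hx'v, hxv⟩ := add_mem_Icc_of_step hx.1 hx'.1 hv
  refine add_mem_demandSet_of_exchange hx hx' hxv hx'v ?_ ?_
  · simp only [dotProduct_add, dotProduct_sub, dotProduct_single]
    linarith [hg.add_le_add_map_inward (mul_pos haj hτ).le hτS]
  · simpa only [dotProduct_single] using mul_le_mul_of_nonneg_right hqj hτ.le

theorem exists_transfer_step {j k : Fin D} (hx : x ∈ demandSet (fun y => g (a ⬝ᵥ y)) q)
    (hx' : x' ∈ demandSet (fun y => g (a ⬝ᵥ y)) q') (haj : 0 < a j) (hak : 0 < a k)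
    (hqj : q' j ≤ q j) (hqk : q k ≤ q' k) (hj : x' j < x j) (hk : x k < x' k) :
    ∃ v, IsStepToward x' x v ∧ v j ≠ 0 ∧ x' + v ∈ demandSet (fun y => g (a ⬝ᵥ y)) q' := by
  have hjk : j ≠ k := by rintro rfl; linarith
  set ε := min (a j * (x j - x' j)) (a k * (x' k - x k))
  have hε : 0 < ε := lt_min (mul_pos haj (by linarith)) (mul_pos hak (by linarith))
  have hεj : ε / a j ≤ x j - x' j := (div_le_iff₀' haj).2 (min_le_left _ _)
  have hεk : ε / a k ≤ x' k - x k := (div_le_iff₀' hak).2 (min_le_right _ _)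
  set v : Fin D → ℝ := Pi.single j (ε / a j) - Pi.single k (ε / a k)
  have hv : IsStepToward x' x v := by
    intro d
    rcases eq_or_ne d j with rfl | hdj
    · simpa [v, hjk] using
        (mem_uIcc.2 (.inl ⟨(div_pos hε haj).le, hεj⟩) : ε / a d ∈ uIcc 0 (x d - x' d))
    rcases eq_or_ne d k with rfl | hdk
    · have hεk' : -(ε / a d) ∈ uIcc 0 (x d - x' d) :=
        mem_uIcc.2 (.inr ⟨by linarith, by linarith [div_pos hε hak]⟩)
      simpa [v, hdj] using hεk'
    · simp [v, hdj, hdk]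
  refine ⟨v, hv, by simpa [v, hjk] using (div_pos hε haj).ne', ?_⟩
  obtain ⟨hx'v, hxv⟩ := add_mem_Icc_of_step hx.1 hx'.1 hv
  have hav : a ⬝ᵥ v = 0 := by
    simp only [v, dotProduct_sub, dotProduct_single, mul_div_cancel₀ _ haj.ne',
      mul_div_cancel₀ _ hak.ne', sub_self]
  refine add_mem_demandSet_of_exchange hx hx' hxv hx'v ?_ ?_
  · simp [dotProduct_add, dotProduct_sub, hav]
  · simp only [v, dotProduct_sub, dotProduct_single]
    nlinarith [div_pos hε haj, div_pos hε hak]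

theorem exists_step_of_price_increase (ha : ∀ d, 0 < a d) (hg : ConcaveOn ℝ univ g)
    (hx : x ∈ demandSet (fun y => g (a ⬝ᵥ y)) q) (hx' : x' ∈ demandSet (fun y => g (a ⬝ᵥ y)) q')
    {e : Fin D} (he : q e ≤ q' e) (hdiff : ∀ i, i ≠ e → q' i = q i)
    {j : Fin D} (hje : j ≠ e) (hj : x' j < x j) :
    ∃ v, IsStepToward x' x v ∧ v j ≠ 0 ∧ x' + v ∈ demandSet (fun y => g (a ⬝ᵥ y)) q' := by
  rcases lt_or_ge (a ⬝ᵥ x') (a ⬝ᵥ x) with hS | hS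
  · exact exists_step_of_dotProduct_lt hg hx hx' (ha j) (hdiff j hje).le hj hS
  obtain ⟨k, hk⟩ : ∃ k, x k < x' k := by
    by_contra! hle
    exact hS.not_gt (Finset.sum_lt_sum (fun d _ => mul_le_mul_of_nonneg_left (hle d) (ha d).le)
      ⟨j, Finset.mem_univ j, mul_lt_mul_of_pos_left hj (ha j)⟩)
  have hqk : q k ≤ q' k := by
    rcases eq_or_ne k e with rfl | hke
    exacts [he, (hdiff k hke).ge]
  exact exists_transfer_step hx hx' (ha j) (ha k) (hdiff j hje).le hqk hj hk

end Aggregate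

theorem demand_substitutes_single_price_increase_general
    (D : ℕ)
    (a : Fin D → ℝ) (ha : ∀ d, 0 < a d)
    (g : ℝ → ℝ)
    (hgconc : ConcaveOn ℝ Set.univ g)
    (hgcont : Continuous g)
    (q q' : Fin D → ℝ)
    (e : Fin D)
    (he : q e ≤ q' e)
    (hdiff : ∀ i, i ≠ e → q' i = q i) :
    ∃ x ∈ demandSet (fun x => g (∑ d, a d * x d)) q,
      ∃ x' ∈ demandSet (fun x => g (∑ d, a d * x d)) q',
        ∀ i, i ≠ e → x i ≤ x' i := by
  have hu : Continuous fun y => g (a ⬝ᵥ y) := hgcont.comp (by fun_prop)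
  obtain ⟨x, hx⟩ := demandSet_nonempty hu q
  obtain ⟨x', hx', hclosest⟩ := (isCompact_demandSet hu q').exists_isMinOn
    (demandSet_nonempty hu q') (f := fun y => ∑ d, |y d - x d|) (by fun_prop)
  refine ⟨x, hx, x', hx', fun j hje => le_of_not_gt fun hj => ?_⟩
  obtain ⟨v, hv, hvj, hx'v⟩ := exists_step_of_price_increase ha hgconc hx hx' he hdiff hje hj
  exact (sum_abs_sub_lt_of_step hv hvj).not_ge (hclosest hx'v)

/-- for `u x = g (∑ d, a d * x d)` with `g` concave, nondecreasing and continuous,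
if the price vector `q'` differs from `q` only at coordinate `e`, where `q' e ≥ q e`, then
there are demanded bundles `x ∈ 𝒟(u,q)` and `x' ∈ 𝒟(u,q')` with `x' i ≥ x i` for all `i ≠ e`. -/
theorem demand_substitutes_single_price_increase
    (D : ℕ) (hD : 0 < D)
    (a : Fin D → ℝ) (ha : ∀ d, 0 < a d)
    (g : ℝ → ℝ)
    (hgconc : ConcaveOn ℝ Set.univ g)
    (hgmono : Monotone g)
    (hgcont : Continuous g)
    (q q' : Fin D → ℝ)
    (hq : ∀ d, 0 < q d) (hq' : ∀ d, 0 < q' d)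
    (e : Fin D)
    (he : q e ≤ q' e)
    (hdiff : ∀ i, i ≠ e → q' i = q i) :
    ∃ x ∈ demandSet (fun x => g (∑ d, a d * x d)) q,
      ∃ x' ∈ demandSet (fun x => g (∑ d, a d * x d)) q',
        ∀ i, i ≠ e → x i ≤ x' i :=
  demand_substitutes_single_price_increase_general D a ha g hgconc hgcont q q' e he hdiff
end

section
/- Let π : ℝ≥0^n → ℝ be submodular, i.e., π(q) + π(b) ≥ π(q ⊔ b) + π(q ⊓ b) for all q, b ∈ ℝ≥0^n. Define w(x) := inf_{q ∈ ℝ≥0^n} (π(q) − q·x) for x ∈ ℝ≥0^n, and suppose this infimum is attained for every x ∈ ℝ≥0^n. Then w is submodular on ℝ≥0^n: w(x) + w(y) ≥ w(x ⊔ y) + w(x ⊓ y) for all x, y ∈ ℝ≥0^n. -/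
/-!
The map `(q, x) ↦ π q - q ⬝ᵥ x` is submodular on pairs of nonnegative vectors: `π` is
submodular, and `-(q ⬝ᵥ x)` is submodular coordinatewise by the two-term rearrangement
inequality. Minimizing a jointly submodular function over one of its variables leaves a
submodular function of the other (Topkis): if `q` and `b` attain `w x` and `w y`, then
`q ⊔ b` and `q ⊓ b` are admissible for `x ⊔ y` and `x ⊓ y`.
-/

open Matrix

def SubmodularOn {α γ : Type*} [Lattice α] [Add γ] [LE γ] (s : Set α) (f : α → γ) : Prop :=
  ∀ x ∈ s, ∀ y ∈ s, f (x ⊔ y) + f (x ⊓ y) ≤ f x + f y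

theorem SubmodularOn.of_attained_partial_inf {α β γ : Type*} [Lattice α] [Lattice β]
    [AddCommMonoid γ] [PartialOrder γ] [IsOrderedAddMonoid γ]
    {S : Set α} {T : Set β} (hS : IsSublattice S) (hT : IsSublattice T) {f : α → β → γ}
    (hf : SubmodularOn (S ×ˢ T) (Function.uncurry f)) {w : β → γ}
    (hlb : ∀ x ∈ T, ∀ q ∈ S, w x ≤ f q x) (hatt : ∀ x ∈ T, ∃ q ∈ S, f q x = w x) :
    SubmodularOn T w := by
  intro x hx y hy
  obtain ⟨q, hq, hqx⟩ := hatt x hx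
  obtain ⟨b, hb, hby⟩ := hatt y hy
  rw [← hqx, ← hby]
  calc w (x ⊔ y) + w (x ⊓ y) ≤ f (q ⊔ b) (x ⊔ y) + f (q ⊓ b) (x ⊓ y) :=
        add_le_add (hlb _ (hT.supClosed hx hy) _ (hS.supClosed hq hb))
          (hlb _ (hT.infClosed hx hy) _ (hS.infClosed hq hb))
    _ ≤ f q x + f b y := hf (q, x) ⟨hq, hx⟩ (b, y) ⟨hb, hy⟩

theorem isSublattice_Ici {α : Type*} [Lattice α] (a : α) : IsSublattice (Set.Ici a) :=
  ⟨isUpperSet_Ici a |>.supClosed, fun _ hx _ hy ↦ le_inf hx hy⟩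

theorem mul_add_mul_le_max_mul_max_add_min_mul_min {R : Type*} [CommRing R] [LinearOrder R]
    [IsStrictOrderedRing R] (q b x y : R) :
    q * x + b * y ≤ max q b * max x y + min q b * min x y := by
  rcases le_total q b with hqb | hqb <;> rcases le_total x y with hxy | hxy <;>
    simp only [max_eq_left, max_eq_right, min_eq_left, min_eq_right, hqb, hxy] <;>
    nlinarith [mul_nonneg (sub_nonneg.2 hqb) (sub_nonneg.2 hxy)]

theorem dotProduct_add_dotProduct_le_sup_add_inf {ι R : Type*} [Fintype ι] [CommRing R]
    [LinearOrder R] [IsStrictOrderedRing R] (q b x y : ι → R) :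
    q ⬝ᵥ x + b ⬝ᵥ y ≤ (q ⊔ b) ⬝ᵥ (x ⊔ y) + (q ⊓ b) ⬝ᵥ (x ⊓ y) := by
  simp only [dotProduct, ← Finset.sum_add_distrib]
  exact Finset.sum_le_sum fun i _ ↦ mul_add_mul_le_max_mul_max_add_min_mul_min _ _ _ _

theorem submodularOn_sub_dotProduct {ι R : Type*} [Fintype ι] [CommRing R] [LinearOrder R]
    [IsStrictOrderedRing R] {S : Set (ι → R)} {π : (ι → R) → R} (hπ : SubmodularOn S π)
    (T : Set (ι → R)) : SubmodularOn (S ×ˢ T) fun p ↦ π p.1 - p.1 ⬝ᵥ p.2 := by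
  rintro ⟨q, x⟩ ⟨hq, -⟩ ⟨b, y⟩ ⟨hb, -⟩
  have := dotProduct_add_dotProduct_le_sup_add_inf q b x y
  have := hπ q hq b hb
  simp only [Prod.mk_sup_mk, Prod.mk_inf_mk]
  linarith

/-- if `π` is submodular on the nonnegative orthant and
`w x = inf_{q ≥ 0} (π q - q·x)` is attained for every `x ≥ 0`, then `w` is submodular
on the nonnegative orthant. -/
theorem legendre_type_transform_submodular
    (n : ℕ) (π : (Fin n → ℝ) → ℝ)
    (hπ : ∀ q b : Fin n → ℝ, 0 ≤ q → 0 ≤ b →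
      π (q ⊔ b) + π (q ⊓ b) ≤ π q + π b)
    (w : (Fin n → ℝ) → ℝ)
    (hlb : ∀ x : Fin n → ℝ, 0 ≤ x → ∀ q : Fin n → ℝ, 0 ≤ q →
      w x ≤ π q - ∑ i, q i * x i)
    (hatt : ∀ x : Fin n → ℝ, 0 ≤ x → ∃ q : Fin n → ℝ, 0 ≤ q ∧
      π q - ∑ i, q i * x i = w x) :
    ∀ x y : Fin n → ℝ, 0 ≤ x → 0 ≤ y →
      w (x ⊔ y) + w (x ⊓ y) ≤ w x + w y := by
  have hπ' : SubmodularOn (Set.Ici 0) π := fun q hq b hb ↦ hπ q b hq hb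
  have hw : SubmodularOn (Set.Ici 0) w :=
    .of_attained_partial_inf (f := fun q x ↦ π q - q ⬝ᵥ x) (isSublattice_Ici 0) (isSublattice_Ici 0)
      (submodularOn_sub_dotProduct hπ' _) hlb hatt
  exact fun x y hx hy ↦ hw x hx y hy
end

section
/- Let v be a real-valued function on subsets of {1,…,n} and let v^+ be its concave closure. Then for every x ∈ [0,1]^n with all coordinates rational, there exists a positive integer k with k·x ∈ ℤ^n and subsets S_1, …, S_k of {1,…,n} with ∑_{i=1}^k 1_{S_i} = k·x (as vectors) such that v^+(x) = (1/k) ∑_{i=1}^k v(S_i); moreover, for every positive integer k and every tuple (S_1,…,S_k) of subsets with ∑_{i=1}^k 1_{S_i} = k·x, one has (1/k) ∑_{i=1}^k v(S_i) ≤ v^+(x). -/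
open Finset Matrix Filter Topology

/-!
The feasible weights `λ` form a polytope in `ℝ^{2^n}` cut out by `λ ≥ 0` and linear equations
with rational coefficients and right-hand sides. A linear objective attains its maximum over such
a compact polytope at an extreme point (the face of maximisers has one by Krein–Milman), and the
extreme points are rational: if `λ_S` were irrational, a `ℚ`-linear `g : ℝ → ℚ` with `g 1 = 0`
and `g λ_S ≠ 0`, applied coordinatewise, gives a nonzero direction `d` that solves the homogeneous
equations and vanishes wherever `λ` does, so `λ` is the midpoint of the feasible points `λ ± ε d`.
Writing a rational optimum as `λ_S = m_S / k` and listing each `S` exactly `m_S` times gives the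
`k` sets. Conversely, the empirical distribution of any `k` sets with `∑ 1_{S_t} = k x` is a
feasible `λ`, which gives the upper bound.
-/

noncomputable def concaveClosure {n : ℕ} (v : Finset (Fin n) → ℝ) (x : Fin n → ℝ) : ℝ :=
  sSup {r : ℝ | ∃ lam : Finset (Fin n) → ℝ,
    (∀ S, 0 ≤ lam S) ∧ (∑ S, lam S = 1) ∧
    (∀ i, (∑ S, lam S * (if i ∈ S then 1 else 0)) = x i) ∧
    r = ∑ S, lam S * v S}

section RationalPolyhedron

variable {ι κ : Type*} [Fintype ι]

def rationalPolyhedron (A : Matrix κ ι ℚ) (b : κ → ℚ) : Set (ι → ℝ) :=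
  {l | 0 ≤ l ∧ A.map (↑) *ᵥ l = fun j => (b j : ℝ)}

theorem isClosed_rationalPolyhedron (A : Matrix κ ι ℚ) (b : κ → ℚ) :
    IsClosed (rationalPolyhedron A b) :=
  (isClosed_le continuous_const continuous_id).inter
    (isClosed_eq (continuous_const.matrix_mulVec continuous_id) continuous_const)

theorem Irrational.exists_dual_one_eq_zero_ne_zero {t : ℝ} (ht : Irrational t) :
    ∃ g : Module.Dual ℚ ℝ, g 1 = 0 ∧ g t ≠ 0 := by
  have ht' : t ∉ Submodule.span ℚ {(1 : ℝ)} := by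
    rw [Submodule.mem_span_singleton]
    rintro ⟨q, rfl⟩
    exact ht ⟨q, by simp [Rat.smul_def]⟩
  obtain ⟨g, hgt, hg⟩ := Submodule.exists_dual_map_eq_bot_of_notMem ht' inferInstance
  refine ⟨g, ?_, hgt⟩
  simpa [hg] using Submodule.mem_map_of_mem (f := g) (Submodule.mem_span_singleton_self (1 : ℝ))

theorem map_ratCast_mulVec_dual_comp_eq_zero {A : Matrix κ ι ℚ} {b : κ → ℚ} {l : ι → ℝ}
    (hl : A.map (↑) *ᵥ l = fun j => (b j : ℝ)) {g : Module.Dual ℚ ℝ} (hg : g 1 = 0) :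
    A.map (↑) *ᵥ (fun i => (g (l i) : ℝ)) = 0 := by
  ext j
  have hj : (A *ᵥ (g ∘ l)) j = 0 := by
    have hgb : g (b j) = 0 := by simpa [hg] using g.map_smul (b j) 1
    rw [← hgb, ← congrFun hl j]
    simp [mulVec, dotProduct, map_sum, ← Rat.smul_def]
  have hcast := (Rat.castHom ℝ).map_mulVec A (g ∘ l) j
  rw [hj, map_zero] at hcast
  exact hcast.symm

theorem eventually_nonneg_add_smul {l d : ι → ℝ} (hl : 0 ≤ l)
    (hd : ∀ i, l i = 0 → d i = 0) :
    ∀ᶠ ε in 𝓝 (0 : ℝ), 0 ≤ l + ε • d := by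
  simp only [Pi.le_def, eventually_all]
  intro i
  rcases (hl i).eq_or_lt with h | h
  · simp [← h, hd i h.symm]
  · have : Tendsto (fun ε : ℝ => l i + ε * d i) (𝓝 0) (𝓝 (l i)) :=
      (by fun_prop : Continuous fun ε : ℝ => l i + ε * d i).tendsto' 0 _ (by simp)
    filter_upwards [this.eventually_const_lt h] with ε hε
    simpa using hε.le

theorem exists_ratCast_eq_of_mem_extremePoints {A : Matrix κ ι ℚ} {b : κ → ℚ} {l : ι → ℝ}
    (hl : l ∈ (rationalPolyhedron A b).extremePoints ℝ) :
    ∃ q : ι → ℚ, l = fun i => (q i : ℝ) := by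
  suffices ∀ i, ¬Irrational (l i) by
    choose q hq using fun i => not_not.1 (this i)
    exact ⟨q, funext fun i => (hq i).symm⟩
  intro i₀ hi₀
  obtain ⟨⟨hl0, hlA⟩, hext⟩ := hl
  obtain ⟨g, hg1, hgi₀⟩ := hi₀.exists_dual_one_eq_zero_ne_zero
  set d : ι → ℝ := fun i => (g (l i) : ℝ)
  have hd_ker : A.map (↑) *ᵥ d = 0 := map_ratCast_mulVec_dual_comp_eq_zero hlA hg1
  have hd_supp : ∀ i, l i = 0 → d i = 0 := fun i h => by simp [d, h]
  have hmem : ∀ c : ℝ, 0 ≤ l + c • d → l + c • d ∈ rationalPolyhedron A b := fun c hc =>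
    ⟨hc, by rw [mulVec_add, mulVec_smul, hd_ker, smul_zero, add_zero, hlA]⟩
  have hnonneg := eventually_nonneg_add_smul hl0 hd_supp
  have hnonneg' := (continuous_neg.tendsto' (0 : ℝ) 0 neg_zero).eventually hnonneg
  obtain ⟨ε, hε, hε₁, hε₂⟩ : ∃ ε : ℝ, 0 < ε ∧ 0 ≤ l + ε • d ∧ 0 ≤ l + (-ε) • d :=
    ((eventually_mem_nhdsWithin (s := Set.Ioi 0) (a := 0)).and
      ((hnonneg.and hnonneg').filter_mono nhdsWithin_le_nhds)).exists
  have hseg : l ∈ openSegment ℝ (l + ε • d) (l + (-ε) • d) :=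
    ⟨1 / 2, 1 / 2, by norm_num, by norm_num, by norm_num, by ext; simp; ring⟩
  have hεd : ε • d = 0 := by simpa using hext (hmem ε hε₁) (hmem (-ε) hε₂) hseg
  exact hgi₀ (by simpa [d, hε.ne'] using congrFun hεd i₀)

theorem exists_ratCast_mem_isMaxOn {A : Matrix κ ι ℚ} {b : κ → ℚ}
    (hP : IsCompact (rationalPolyhedron A b)) (hne : (rationalPolyhedron A b).Nonempty)
    (φ : StrongDual ℝ (ι → ℝ)) :
    ∃ q : ι → ℚ, (fun i => (q i : ℝ)) ∈ rationalPolyhedron A b ∧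
      IsMaxOn φ (rationalPolyhedron A b) (fun i => (q i : ℝ)) := by
  have hF : IsExposed ℝ (rationalPolyhedron A b) (φ.toExposed _) :=
    ContinuousLinearMap.toExposed.isExposed
  obtain ⟨z, hzP, hz⟩ := hP.exists_isMaxOn hne φ.continuous.continuousOn
  obtain ⟨l, hl⟩ := (hF.isCompact hP).extremePoints_nonempty ⟨z, hzP, fun y hy => hz hy⟩
  obtain ⟨q, rfl⟩ :=
    exists_ratCast_eq_of_mem_extremePoints (hF.isExtreme.extremePoints_subset_extremePoints hl)
  exact ⟨q, hl.1.1, fun y hy => hl.1.2 y hy⟩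

end RationalPolyhedron

section EmpiricalWeights

variable {α : Type*} [Fintype α] [DecidableEq α]

noncomputable def empiricalWeights {k : ℕ} (S : Fin k → α) (a : α) : ℝ := #{t | S t = a} / k

theorem sum_empiricalWeights_mul {k : ℕ} (S : Fin k → α) (g : α → ℝ) :
    ∑ a, empiricalWeights S a * g a = (∑ t, g (S t)) / k := by
  rw [← Finset.sum_fiberwise' univ S g, Finset.sum_div]
  refine Finset.sum_congr rfl fun a _ => ?_
  simp [empiricalWeights, div_mul_eq_mul_div]

theorem exists_fin_tuple_card_fiber_eq (m : α → ℕ) :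
    ∃ S : Fin (∑ a, m a) → α, ∀ a, #{t | S t = a} = m a := by
  let e : (Σ a, Fin (m a)) ≃ Fin (∑ a, m a) := Fintype.equivFinOfCardEq (by simp)
  refine ⟨fun t => (e.symm t).1, fun a => ?_⟩
  rw [card_filter, ← e.sum_comp]
  simp only [Equiv.symm_apply_apply]
  rw [← univ_sigma_univ, sum_sigma]
  simp [apply_ite]

theorem exists_pos_nat_mul_eq_natCast (q : α → ℚ) (hq : 0 ≤ q) :
    ∃ k : ℕ, 0 < k ∧ ∃ m : α → ℕ, ∀ a, (m a : ℚ) = k * q a := by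
  refine ⟨∏ a, (q a).den, prod_pos fun a _ => (q a).pos,
    fun a => (q a).num.toNat * ∏ b ∈ univ.erase a, (q b).den, fun a => ?_⟩
  rw [← mul_prod_erase univ _ (mem_univ a)]
  have hnum : ((q a).num.toNat : ℚ) = (q a).num :=
    mod_cast Int.toNat_of_nonneg (Rat.num_nonneg.2 (hq a))
  push_cast
  rw [hnum, ← Rat.mul_den_eq_num]
  ring

theorem exists_empiricalWeights_eq_ratCast (q : α → ℚ)
    (hq : (fun a => (q a : ℝ)) ∈ stdSimplex ℝ α) :
    ∃ k : ℕ, 0 < k ∧ ∃ S : Fin k → α, empiricalWeights S = fun a => (q a : ℝ) := by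
  obtain ⟨k, hk, m, hm⟩ := exists_pos_nat_mul_eq_natCast q fun a => by simpa using hq.1 a
  obtain ⟨S, hS⟩ := exists_fin_tuple_card_fiber_eq m
  have hsum : ∑ a, m a = k := by
    have hq1 : ∑ a, q a = 1 := by
      exact_mod_cast (show ((∑ a, q a : ℚ) : ℝ) = 1 by push_cast; exact hq.2)
    exact_mod_cast (by simp [hm, ← mul_sum, hq1] : ((∑ a, m a : ℕ) : ℚ) = k)
  subst hsum
  refine ⟨_, hk, S, funext fun a => ?_⟩
  have hma : (m a : ℝ) = (∑ b, m b : ℕ) * q a := by exact_mod_cast hm a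
  rw [empiricalWeights, hS, hma]
  field_simp

end EmpiricalWeights

section MarginalPolytope

variable {ι : Type*} [Fintype ι] [DecidableEq ι]

def marginalPolytope (x : ι → ℝ) : Set (Finset ι → ℝ) :=
  {lam ∈ stdSimplex ℝ (Finset ι) | ∀ i, ∑ S, lam S * (if i ∈ S then 1 else 0) = x i}

variable (ι) in
def subsetIncidence : Matrix (Option ι) (Finset ι) ℚ :=
  fun j S => j.elim 1 fun i => if i ∈ S then 1 else 0

theorem marginalPolytope_ratCast (r : ι → ℚ) :
    marginalPolytope (fun i => (r i : ℝ)) =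
      rationalPolyhedron (subsetIncidence ι) (fun j => j.elim 1 r) := by
  ext lam
  simp [marginalPolytope, stdSimplex, rationalPolyhedron, subsetIncidence, funext_iff,
    Option.forall, mulVec, dotProduct, Pi.le_def, mul_comm, apply_ite, and_assoc]

theorem sum_prod_mul_prod_compl {R : Type*} [CommSemiring R] (f g : ι → R) :
    ∑ S, (∏ i ∈ S, f i) * ∏ i ∈ Sᶜ, g i = ∏ i, (f i + g i) := by
  simp [prod_add, compl_eq_univ_sdiff]

noncomputable def productWeights (p : ι → ℝ) (S : Finset ι) : ℝ :=
  (∏ i ∈ S, p i) * ∏ i ∈ Sᶜ, (1 - p i)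

theorem sum_productWeights (p : ι → ℝ) : ∑ S, productWeights p S = 1 := by
  simp [productWeights, sum_prod_mul_prod_compl]

theorem sum_productWeights_mul_indicator (p : ι → ℝ) (i : ι) :
    ∑ S, productWeights p S * (if i ∈ S then 1 else 0) = p i := by
  -- Zeroing the `i`-th factor of `1 - p` kills exactly the terms with `i ∉ S`.
  let g := Function.update (fun j => 1 - p j) i 0
  have hS : ∀ S : Finset ι, productWeights p S * (if i ∈ S then 1 else 0) =
      (∏ j ∈ S, p j) * ∏ j ∈ Sᶜ, g j := by
    intro S
    by_cases hi : i ∈ S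
    · simp only [productWeights, hi, if_true, mul_one]
      congr 1
      refine prod_congr rfl fun j hj => ?_
      have hji : j ≠ i := by rintro rfl; exact mem_compl.1 hj hi
      simp [g, hji]
    · rw [if_neg hi, mul_zero, prod_eq_zero (mem_compl.2 hi) (by simp [g]), mul_zero]
  rw [sum_congr rfl fun S _ => hS S, sum_prod_mul_prod_compl, prod_eq_single i]
  · simp [g]
  · intro j _ hj
    simp [g, hj]
  · simp

theorem productWeights_mem_marginalPolytope {x : ι → ℝ} (hx : x ∈ Set.Icc 0 1) :
    productWeights x ∈ marginalPolytope x :=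
  ⟨⟨fun _ => mul_nonneg (prod_nonneg fun i _ => hx.1 i)
      (prod_nonneg fun i _ => sub_nonneg.2 (hx.2 i)), sum_productWeights x⟩,
    sum_productWeights_mul_indicator x⟩

theorem empiricalWeights_mem_marginalPolytope_iff {x : ι → ℝ} {k : ℕ} (hk : 0 < k)
    (S : Fin k → Finset ι) :
    empiricalWeights S ∈ marginalPolytope x ↔
      ∀ i, (∑ t, if i ∈ S t then (1 : ℝ) else 0) = k * x i := by
  have hk' : (k : ℝ) ≠ 0 := by positivity
  have hmarg : ∀ i, ∑ T, empiricalWeights S T * (if i ∈ T then 1 else 0) =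
      (∑ t, if i ∈ S t then (1 : ℝ) else 0) / k := fun i => sum_empiricalWeights_mul S _
  refine ⟨fun h i => by rw [← h.2 i, hmarg]; field_simp,
    fun hS => ⟨⟨fun T => ?_, ?_⟩, fun i => ?_⟩⟩
  · unfold empiricalWeights
    positivity
  · simpa [hk'] using sum_empiricalWeights_mul S 1
  · rw [hmarg, hS i]
    field_simp

end MarginalPolytope

section ConcaveClosure

variable {n : ℕ} (v : Finset (Fin n) → ℝ)

theorem concaveClosure_eq_sSup_image (x : Fin n → ℝ) :
    concaveClosure v x = sSup ((fun lam => ∑ S, lam S * v S) '' marginalPolytope x) := by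
  unfold concaveClosure
  congr 1
  ext r
  simp [marginalPolytope, stdSimplex, eq_comm, and_assoc]

theorem le_concaveClosure {x : Fin n → ℝ} {lam : Finset (Fin n) → ℝ}
    (hlam : lam ∈ marginalPolytope x) : ∑ S, lam S * v S ≤ concaveClosure v x := by
  rw [concaveClosure_eq_sSup_image]
  refine le_csSup (((isCompact_stdSimplex ℝ _).image ?_).bddAbove.mono
    (Set.image_mono fun _ h => h.1)) ⟨lam, hlam, rfl⟩
  fun_prop

theorem exists_ratCast_mem_marginalPolytope_concaveClosure_eq (r : Fin n → ℚ)
    (hr : (fun i => (r i : ℝ)) ∈ Set.Icc 0 1) :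
    ∃ q : Finset (Fin n) → ℚ,
      (fun S => (q S : ℝ)) ∈ marginalPolytope (fun i => (r i : ℝ)) ∧
      concaveClosure v (fun i => (r i : ℝ)) = ∑ S, q S * v S := by
  let φ : StrongDual ℝ (Finset (Fin n) → ℝ) := ∑ S, v S • ContinuousLinearMap.proj S
  have hφ : ∀ lam, φ lam = ∑ S, lam S * v S := fun lam => by simp [φ, mul_comm]
  have hP : IsCompact (marginalPolytope fun i => (r i : ℝ)) :=
    (isCompact_stdSimplex ℝ _).of_isClosed_subset
      (marginalPolytope_ratCast r ▸ isClosed_rationalPolyhedron _ _) fun _ h => h.1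
  rw [marginalPolytope_ratCast] at hP ⊢
  obtain ⟨q, hqP, hqmax⟩ := exists_ratCast_mem_isMaxOn hP
    (marginalPolytope_ratCast r ▸ ⟨_, productWeights_mem_marginalPolytope hr⟩) φ
  refine ⟨q, hqP, ?_⟩
  rw [concaveClosure_eq_sSup_image, marginalPolytope_ratCast, ← funext hφ, sSup_image',
    hqmax.iSup_eq hqP, hφ]

end ConcaveClosure

/-- for rational `x ∈ [0,1]^n`, the concave closure `v⁺(x)` is attained by an
equal-weight combination: there is `k > 0` with `k·x` integral and sets `S_1, …, S_k` with
`∑_t 1_{S_t} = k·x` such that `v⁺(x) = (1/k) ∑_t v(S_t)`; moreover, every such equal-weight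
combination has value at most `v⁺(x)`. -/
theorem concaveClosure_eq_equitable_combination
    (n : ℕ) (v : Finset (Fin n) → ℝ) (x : Fin n → ℝ)
    (hx : x ∈ Set.Icc (0 : Fin n → ℝ) 1)
    (hrat : ∀ i, ∃ r : ℚ, x i = (r : ℝ)) :
    (∃ k : ℕ, 0 < k ∧ (∀ i, ∃ z : ℤ, (k : ℝ) * x i = (z : ℝ)) ∧
      ∃ S : Fin k → Finset (Fin n),
        (∀ i, (∑ t, if i ∈ S t then (1 : ℝ) else 0) = (k : ℝ) * x i) ∧
        concaveClosure v x = (1 / (k : ℝ)) * ∑ t, v (S t)) ∧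
    (∀ k : ℕ, 0 < k → ∀ S : Fin k → Finset (Fin n),
      (∀ i, (∑ t, if i ∈ S t then (1 : ℝ) else 0) = (k : ℝ) * x i) →
      (1 / (k : ℝ)) * ∑ t, v (S t) ≤ concaveClosure v x) := by
  choose r hr using hrat
  obtain rfl : x = fun i => (r i : ℝ) := funext hr
  refine ⟨?_, fun k hk S hS => ?_⟩
  · obtain ⟨q, hqP, hq⟩ := exists_ratCast_mem_marginalPolytope_concaveClosure_eq v r hx
    obtain ⟨k, hk, S, hS⟩ := exists_empiricalWeights_eq_ratCast q hqP.1
    have hmarg := (empiricalWeights_mem_marginalPolytope_iff hk S).1 (hS ▸ hqP)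
    refine ⟨k, hk, fun i => ⟨#{t | i ∈ S t}, by rw [← hmarg, sum_boole]; simp⟩, S, hmarg, ?_⟩
    have hval := sum_empiricalWeights_mul S v
    rw [hS] at hval
    rw [hq, hval]
    ring
  · have hval := le_concaveClosure v ((empiricalWeights_mem_marginalPolytope_iff hk S).2 hS)
    rwa [sum_empiricalWeights_mul, div_eq_inv_mul, ← one_div] at hval
end

section
/- Let n ≥ 1, let w_1, …, w_n ≥ 0 be job weights, and for p ∈ ℝ≥0^n define F(p) := min over permutations σ of {1,…,n} of ∑_{j=1}^n w_j · ( ∑_{j' : σ(j') ≤ σ(j)} p_{j'} ). Then F(p) = ∑_{j=1}^n w_j p_j + ∑_{1 ≤ j < k ≤ n} min( w_j p_k, w_k p_j ). -/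
/-- The total weighted completion time of jobs `Fin n` with weights `w` and processing
times `p`, scheduled non-preemptively on one machine in the order given by the permutation
`σ`: job `j` completes at time `∑_{j' : σ j' ≤ σ j} p j'`. -/
def weightedCompletionTime {n : ℕ} (w p : Fin n → ℝ) (σ : Equiv.Perm (Fin n)) : ℝ :=
  ∑ j, w j * ∑ j' ∈ Finset.univ.filter (fun j' => σ j' ≤ σ j), p j'

/-- The minimum total weighted completion time over all orderings of the jobs. -/
noncomputable def minWeightedCompletionTime {n : ℕ} (w p : Fin n → ℝ) : ℝ :=
  Finset.univ.inf' ⟨1, Finset.mem_univ 1⟩ (fun σ : Equiv.Perm (Fin n) => weightedCompletionTime w p σ)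

/-!
Every schedule costs `∑ w_j p_j` plus, for each pair `j < k`, the cost `w_k p_j` or `w_j p_k`
that the later job pays for waiting on the earlier one; each pair therefore costs at least
`min (w_j p_k) (w_k p_j)`. Smith's rule — order the jobs by nondecreasing `p_j / w_j` —
attains this minimum for every pair simultaneously.
-/

open Finset

theorem Finset.sum_sum_eq_sum_diag_add_sum_lt {ι M : Type*} [Fintype ι] [LinearOrder ι]
    [AddCommMonoid M] (g : ι → ι → M) :
    ∑ j, ∑ k, g j k = ∑ j, g j j + ∑ j, ∑ k ∈ univ.filter (j < ·), (g j k + g k j) := by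
  have split_row (j : ι) : ∑ k, g j k =
      g j j + ∑ k ∈ univ.filter (j < ·), g j k + ∑ k ∈ univ.filter (· < j), g j k := by
    rw [sum_filter, sum_filter, ← Fintype.sum_ite_eq j (g j), ← sum_add_distrib,
      ← sum_add_distrib]
    refine sum_congr rfl fun k _ => ?_
    rcases lt_trichotomy j k with h | rfl | h
    · simp [h, h.ne, h.not_gt]
    · simp
    · simp [h, h.ne', h.not_gt]
  have swap : ∑ j, ∑ k ∈ univ.filter (· < j), g j k = ∑ j, ∑ k ∈ univ.filter (j < ·), g k j :=
    sum_comm' (by simp)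
  simp only [split_row, sum_add_distrib, swap, add_assoc]

theorem exists_perm_lt_imp_le {α : Type*} [LinearOrder α] {n : ℕ} (f : Fin n → α) :
    ∃ σ : Equiv.Perm (Fin n), ∀ j k, σ j < σ k → f j ≤ f k :=
  ⟨(Tuple.sort f)⁻¹, fun j k h => by simpa using Tuple.monotone_sort f h.le⟩

theorem mul_le_mul_of_div_add_le_div_add {a b c d : ℝ} (ha : 0 ≤ a) (hb : 0 ≤ b) (hc : 0 ≤ c)
    (hd : 0 ≤ d) (h : a / (a + b) ≤ c / (c + d)) : a * d ≤ c * b := by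
  rcases (add_nonneg ha hb).eq_or_lt with hab | hab
  · obtain ⟨rfl, rfl⟩ : a = 0 ∧ b = 0 := by constructor <;> linarith
    simp
  rcases (add_nonneg hc hd).eq_or_lt with hcd | hcd
  · obtain ⟨rfl, rfl⟩ : c = 0 ∧ d = 0 := by constructor <;> linarith
    simp
  rw [div_le_div_iff₀ hab hcd] at h
  linarith

theorem exists_smith_order {n : ℕ} {w p : Fin n → ℝ} (hw : ∀ j, 0 ≤ w j) (hp : ∀ j, 0 ≤ p j) :
    ∃ σ : Equiv.Perm (Fin n), ∀ j k, σ j < σ k → p j * w k ≤ p k * w j := by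
  -- `p / (p + w)` orders jobs as `p / w` does; its junk value `0 / 0 = 0` occurs only for a job
  -- with `p = w = 0`, which may stand anywhere.
  obtain ⟨σ, hσ⟩ := exists_perm_lt_imp_le fun j => p j / (p j + w j)
  exact ⟨σ, fun j k h =>
    mul_le_mul_of_div_add_le_div_add (hp j) (hw j) (hp k) (hw k) (hσ j k h)⟩

section

variable {n : ℕ} (w p : Fin n → ℝ) (σ : Equiv.Perm (Fin n))

theorem weightedCompletionTime_eq_sum_add_sum_pairs :
    weightedCompletionTime w p σ = ∑ j, w j * p j +
      ∑ j, ∑ k ∈ univ.filter (j < ·), if σ j < σ k then w k * p j else w j * p k := by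
  have row (j : Fin n) : w j * ∑ k ∈ univ.filter (fun k => σ k ≤ σ j), p k =
      ∑ k, if σ k ≤ σ j then w j * p k else 0 := by
    rw [mul_sum, sum_filter]
  rw [weightedCompletionTime, sum_congr rfl fun j _ => row j,
    sum_sum_eq_sum_diag_add_sum_lt]
  refine congr_arg₂ (· + ·) (by simp) (sum_congr rfl fun j _ => sum_congr rfl fun k hk => ?_)
  have hjk : σ j ≠ σ k := σ.injective.ne (mem_filter.mp hk).2.ne
  rcases hjk.lt_or_gt with h | h
  · rw [if_neg h.not_ge, if_pos h.le, if_pos h, zero_add]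
  · rw [if_pos h.le, if_neg h.not_ge, if_neg h.not_gt, add_zero]

theorem sum_add_sum_min_le_weightedCompletionTime :
    ∑ j, w j * p j + ∑ j, ∑ k ∈ univ.filter (j < ·), min (w j * p k) (w k * p j) ≤
      weightedCompletionTime w p σ := by
  rw [weightedCompletionTime_eq_sum_add_sum_pairs]
  gcongr with j _ k _
  split_ifs
  · exact min_le_right _ _
  · exact min_le_left _ _

variable {w p σ}

theorem weightedCompletionTime_eq_sum_add_sum_min
    (hσ : ∀ j k, σ j < σ k → p j * w k ≤ p k * w j) :
    weightedCompletionTime w p σ = ∑ j, w j * p j +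
      ∑ j, ∑ k ∈ univ.filter (j < ·), min (w j * p k) (w k * p j) := by
  rw [weightedCompletionTime_eq_sum_add_sum_pairs]
  congr 1
  refine sum_congr rfl fun j _ => sum_congr rfl fun k hk => ?_
  have hjk : σ j ≠ σ k := σ.injective.ne (mem_filter.mp hk).2.ne
  rcases hjk.lt_or_gt with h | h
  · rw [if_pos h, min_eq_right (by linarith [hσ j k h])]
  · rw [if_neg h.not_gt, min_eq_left (by linarith [hσ k j h])]

end

theorem minWeightedCompletionTime_closed_form_general
    (n : ℕ) (w p : Fin n → ℝ)
    (hw : ∀ j, 0 ≤ w j) (hp : ∀ j, 0 ≤ p j) :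
    minWeightedCompletionTime w p =
      (∑ j, w j * p j) +
        ∑ j, ∑ k ∈ Finset.univ.filter (fun k => j < k), min (w j * p k) (w k * p j) := by
  obtain ⟨σ, hσ⟩ := exists_smith_order hw hp
  refine le_antisymm ?_ (le_inf' _ _ fun τ _ => sum_add_sum_min_le_weightedCompletionTime w p τ)
  exact (inf'_le _ (mem_univ σ)).trans_eq (weightedCompletionTime_eq_sum_add_sum_min hσ)

/-- closed form for the minimum total weighted completion time:
`F(p) = ∑_j w_j p_j + ∑_{j < k} min (w_j p_k) (w_k p_j)`. -/
theorem minWeightedCompletionTime_closed_form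
    (n : ℕ) (hn : 1 ≤ n) (w p : Fin n → ℝ)
    (hw : ∀ j, 0 ≤ w j) (hp : ∀ j, 0 ≤ p j) :
    minWeightedCompletionTime w p =
      (∑ j, w j * p j) +
        ∑ j, ∑ k ∈ Finset.univ.filter (fun k => j < k), min (w j * p k) (w k * p j) :=
  minWeightedCompletionTime_closed_form_general n w p hw hp
end

section
/- Let n ≥ 1, let w_1, …, w_n ≥ 0 be job weights, and for p ∈ ℝ≥0^n define F(p) := min over permutations σ of {1,…,n} of ∑_{j=1}^n w_j · ( ∑_{j' : σ(j') ≤ σ(j)} p_{j'} ). Then F is supermodular on ℝ≥0^n: for all p, p' ∈ ℝ≥0^n, F(p) + F(p') ≤ F(p ⊔ p') + F(p ⊓ p'), where ⊔ and ⊓ denote componentwise maximum and minimum. -/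
/-!
By Smith's rule the optimal value has the closed form
`F(p) = ∑ j, w j * p j + ∑_{i < j} min (w j * p i) (w i * p j)`: every schedule pays, for each
pair of jobs, the cross term of whichever job runs first, and ordering the jobs by `p / w`
always pays the smaller one. The linear part is modular in `p`, and each pair term is the
minimum of two nondecreasing functions of different coordinates, hence supermodular.
-/

open Finset Function

theorem sum_sum_ite_lt_add_self_of_injective {ι α M : Type*} [Fintype ι] [DecidableEq ι]
    [LinearOrder α] [AddCommMonoid M] {f : ι → α} (hf : Injective f) (m : ι → ι → M)
    (hm : ∀ i j, m i j = m j i) :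
    (∑ i, ∑ j, if f i < f j then m i j else 0) + ∑ i, ∑ j, (if f i < f j then m i j else 0) =
      ∑ i, ∑ j, if i = j then 0 else m i j := by
  have hsplit : ∀ i j, (if i = j then 0 else m i j) =
      (if f i < f j then m i j else 0) + (if f j < f i then m j i else 0) := by
    intro i j
    rcases eq_or_ne i j with rfl | hij
    · simp
    · rcases (hf.ne hij).lt_or_gt with hlt | hgt
      · simp [hij, hlt, hlt.not_gt]
      · simp [hij, hgt, hgt.not_gt, hm i j]
  simp_rw [hsplit, sum_add_distrib]
  exact congrArg _ sum_comm

theorem sum_sum_ite_lt_of_injective {ι α : Type*} [Fintype ι] [LinearOrder ι] [LinearOrder α]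
    {f : ι → α} (hf : Injective f) (m : ι → ι → ℝ) (hm : ∀ i j, m i j = m j i) :
    (∑ i, ∑ j, if f i < f j then m i j else 0) = ∑ i, ∑ j, if i < j then m i j else 0 := by
  have hhalf := sum_sum_ite_lt_add_self_of_injective hf m hm
  have hid := sum_sum_ite_lt_add_self_of_injective injective_id m hm
  simp only [id] at hid
  linarith

theorem min_add_min_le_min_max_add_min_min {α : Type*} [AddCommMonoid α] [LinearOrder α]
    [IsOrderedAddMonoid α] (s t s' t' : α) :
    min s t + min s' t' ≤ min (max s s') (max t t') + min (min s s') (min t t') := by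
  wlog h : min s t ≤ min s' t' generalizing s t s' t'
  · have := this s' t' s t (le_of_not_ge h)
    rwa [add_comm, max_comm s', max_comm t', min_comm s' s, min_comm t' t] at this
  have hmax : min s' t' ≤ min (max s s') (max t t') :=
    min_le_min (le_max_right _ _) (le_max_right _ _)
  have hmin : min s t ≤ min (min s s') (min t t') :=
    le_min (le_min (min_le_left _ _) (h.trans (min_le_left _ _)))
      (le_min (min_le_right _ _) (h.trans (min_le_right _ _)))
  rw [add_comm]
  exact add_le_add hmax hmin

section Scheduling

variable {n : ℕ} (w p : Fin n → ℝ)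

theorem weightedCompletionTime_eq (σ : Equiv.Perm (Fin n)) :
    weightedCompletionTime w p σ =
      ∑ j, w j * p j + ∑ i, ∑ j, if σ i < σ j then w j * p i else 0 := by
  have hsplit : ∀ i j, (if σ i ≤ σ j then w j * p i else 0) =
      (if i = j then w j * p i else 0) + (if σ i < σ j then w j * p i else 0) := by
    intro i j
    rcases eq_or_ne i j with rfl | hij
    · simp
    · simp [hij, le_iff_lt_or_eq, σ.injective.eq_iff]
  simp_rw [weightedCompletionTime, mul_sum, sum_filter]
  rw [sum_comm]
  simp_rw [hsplit, sum_add_distrib, sum_ite_eq, mem_univ, if_true]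

/-- Smith's closed form of the optimal total weighted completion time. -/
noncomputable def pairwiseMinCost : ℝ :=
  ∑ j, w j * p j + ∑ i, ∑ j, if i < j then min (w j * p i) (w i * p j) else 0

/-- Smith's rule: the jobs in nondecreasing order of `p j / w j`, computed in `ℝ≥0∞` so that a
job of weight zero and positive length comes last. -/
noncomputable def smithOrder : Equiv.Perm (Fin n) :=
  (Tuple.sort fun j => ENNReal.ofReal (p j) / ENNReal.ofReal (w j))⁻¹

theorem pairwiseMinCost_le_weightedCompletionTime (σ : Equiv.Perm (Fin n)) :
    pairwiseMinCost w p ≤ weightedCompletionTime w p σ := by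
  rw [weightedCompletionTime_eq, pairwiseMinCost,
    ← sum_sum_ite_lt_of_injective σ.injective _ fun i j => min_comm _ _]
  gcongr with i _ j _
  split_ifs
  exacts [min_le_left _ _, le_rfl]

theorem mul_le_mul_of_ofReal_div_le {a b c d : ℝ} (ha : 0 ≤ a) (hb : 0 ≤ b) (hc : 0 ≤ c)
    (hd : 0 ≤ d)
    (h : ENNReal.ofReal a / ENNReal.ofReal b ≤ ENNReal.ofReal c / ENNReal.ofReal d) :
    d * a ≤ b * c := by
  rcases hd.eq_or_lt with rfl | hd
  · simpa using mul_nonneg hb hc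
  rcases ha.eq_or_lt with rfl | ha
  · simpa using mul_nonneg hb hc
  rcases hb.eq_or_lt with rfl | hb
  · have : ENNReal.ofReal c / ENNReal.ofReal d ≠ ⊤ :=
      ENNReal.div_ne_top ENNReal.ofReal_ne_top (by simpa using hd)
    exact absurd (top_le_iff.mp (by simpa [ENNReal.div_zero, ha] using h)) this
  rw [← ENNReal.ofReal_div_of_pos hb, ← ENNReal.ofReal_div_of_pos hd,
    ENNReal.ofReal_le_ofReal_iff (by positivity), div_le_div_iff₀ hb hd] at h
  linarith

theorem weightedCompletionTime_smithOrder (hw : ∀ j, 0 ≤ w j) (hp : ∀ j, 0 ≤ p j) :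
    weightedCompletionTime w p (smithOrder w p) = pairwiseMinCost w p := by
  have hexchange : ∀ i j, smithOrder w p i < smithOrder w p j → w j * p i ≤ w i * p j := by
    intro i j hij
    refine mul_le_mul_of_ofReal_div_le (hp i) (hw i) (hp j) (hw j) ?_
    simpa [smithOrder] using
      Tuple.monotone_sort (fun j => ENNReal.ofReal (p j) / ENNReal.ofReal (w j)) hij.le
  rw [weightedCompletionTime_eq, pairwiseMinCost,
    ← sum_sum_ite_lt_of_injective (smithOrder w p).injective _ fun i j => min_comm _ _]
  congr 1
  refine sum_congr rfl fun i _ => sum_congr rfl fun j _ => ?_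
  split_ifs with hij
  exacts [(min_eq_left (hexchange i j hij)).symm, rfl]

theorem minWeightedCompletionTime_eq_pairwiseMinCost (hw : ∀ j, 0 ≤ w j) (hp : ∀ j, 0 ≤ p j) :
    minWeightedCompletionTime w p = pairwiseMinCost w p :=
  le_antisymm
    ((inf'_le _ (mem_univ _)).trans (weightedCompletionTime_smithOrder w p hw hp).le)
    (le_inf' _ _ fun σ _ => pairwiseMinCost_le_weightedCompletionTime w p σ)

theorem pairwiseMinCost_supermodular (hw : ∀ j, 0 ≤ w j) (p' : Fin n → ℝ) :
    pairwiseMinCost w p + pairwiseMinCost w p' ≤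
      pairwiseMinCost w (p ⊔ p') + pairwiseMinCost w (p ⊓ p') := by
  have hlinear : ∑ j, w j * (p ⊔ p') j + ∑ j, w j * (p ⊓ p') j =
      ∑ j, w j * p j + ∑ j, w j * p' j := by
    simp_rw [← sum_add_distrib, ← mul_add, Pi.sup_apply, Pi.inf_apply, max_add_min]
  have hpairs : ∀ i j, (if i < j then min (w j * p i) (w i * p j) else 0) +
      (if i < j then min (w j * p' i) (w i * p' j) else 0) ≤
      (if i < j then min (w j * (p ⊔ p') i) (w i * (p ⊔ p') j) else 0) +
      (if i < j then min (w j * (p ⊓ p') i) (w i * (p ⊓ p') j) else 0) := by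
    intro i j
    split_ifs
    · simp only [Pi.sup_apply, Pi.inf_apply, mul_max_of_nonneg _ _ (hw _),
        mul_min_of_nonneg _ _ (hw _)]
      exact min_add_min_le_min_max_add_min_min _ _ _ _
    · simp
  have hquadratic := sum_le_sum fun i (_ : i ∈ univ) => sum_le_sum fun j (_ : j ∈ univ) =>
    hpairs i j
  simp only [sum_add_distrib] at hquadratic
  simp only [pairwiseMinCost]
  linarith

end Scheduling

theorem minWeightedCompletionTime_supermodular_general
    (n : ℕ) (w : Fin n → ℝ) (hw : ∀ j, 0 ≤ w j) :
    ∀ p p' : Fin n → ℝ, 0 ≤ p → 0 ≤ p' →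
      minWeightedCompletionTime w p + minWeightedCompletionTime w p' ≤
        minWeightedCompletionTime w (p ⊔ p') + minWeightedCompletionTime w (p ⊓ p') := by
  intro p p' hp hp'
  rw [minWeightedCompletionTime_eq_pairwiseMinCost w p hw hp,
    minWeightedCompletionTime_eq_pairwiseMinCost w p' hw hp',
    minWeightedCompletionTime_eq_pairwiseMinCost w _ hw (le_sup_of_le_left hp),
    minWeightedCompletionTime_eq_pairwiseMinCost w _ hw (le_inf hp hp')]
  exact pairwiseMinCost_supermodular w p hw p'

/-- the minimum total weighted completion time `F` is supermodular in the
vector of processing times on the nonnegative orthant. -/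
theorem minWeightedCompletionTime_supermodular
    (n : ℕ) (hn : 1 ≤ n) (w : Fin n → ℝ) (hw : ∀ j, 0 ≤ w j) :
    ∀ p p' : Fin n → ℝ, 0 ≤ p → 0 ≤ p' →
      minWeightedCompletionTime w p + minWeightedCompletionTime w p' ≤
        minWeightedCompletionTime w (p ⊔ p') + minWeightedCompletionTime w (p ⊓ p') :=
  minWeightedCompletionTime_supermodular_general n w hw
end

section
/- Let there be n jobs and m machines with processing times p_{i,j} > 0 for machine i ∈ {1,…,m} and job j ∈ {1,…,n}. For a subset S of jobs, define g(S) := min over injective maps φ from S into {1,…,m} × {1,…,n} of ∑_{j ∈ S} k(φ(j)) · p_{i(φ(j)), j}, where φ(j) = (i(φ(j)), k(φ(j))) assigns job j to machine i(φ(j)) in the k(φ(j))-th position from the back. Then g is supermodular: g(A) + g(B) ≤ g(A ∪ B) + g(A ∩ B) for all subsets A, B of jobs. -/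
/-!
Take an optimal assignment `φ₁` of `A ∪ B` and an optimal assignment `φ₂` of `A ∩ B`. Every job
of `A ∩ B` owns two slots, `φ₁ j` and `φ₂ j`; handing one of them to the copy of `j` in `A` and
the other to its copy in `B` (and `φ₁` to everything else) splits the combined cost
`g(A ∪ B) + g(A ∩ B)` exactly into the cost of an assignment of `A` and one of `B`. The split
must avoid two jobs sharing a slot: the union of the two matchings decomposes into alternating
paths and cycles, and a job of `A ∩ B` gives `φ₂ j` to `A` exactly when its alternating path
ends in `B \ A`.
-/

/-- The residual-optimum cost of a job set `S`: the minimum, over assignments `φ` of the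
jobs in `S` to distinct machine–slot pairs `(i, k)` (machine `i`, `k`-th position from the
back, `k ∈ {1, …, n}` encoded as `Fin n` with cost factor `k+1`), of
`∑_{j ∈ S} k(φ j) · p (i (φ j)) j`. -/
noncomputable def minMatchingCost {n m : ℕ} (p : Fin m → Fin n → ℝ) (S : Finset (Fin n)) : ℝ :=
  sInf {c : ℝ | ∃ φ : Fin n → Fin m × Fin n, Set.InjOn φ ↑S ∧
    c = ∑ j ∈ S, (((φ j).2 : ℕ) + 1 : ℝ) * p (φ j).1 j}

open Finset Relation

section Exchange

variable {α β : Type*} [DecidableEq α]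

theorem Finset.injOn_piecewise {f g : α → β} {S : Set α} {T : Finset α}
    (hf : Set.InjOn f S) (hg : Set.InjOn g T)
    (hfg : ∀ x ∈ T, ∀ y ∈ S, y ∉ T → g x ≠ f y) : Set.InjOn (T.piecewise g f) S := by
  intro x hx y hy hxy
  by_cases hxT : x ∈ T <;> by_cases hyT : y ∈ T
  · rw [piecewise_eq_of_mem _ _ _ hxT, piecewise_eq_of_mem _ _ _ hyT] at hxy
    exact hg hxT hyT hxy
  · rw [piecewise_eq_of_mem _ _ _ hxT, piecewise_eq_of_notMem _ _ _ hyT] at hxy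
    exact absurd hxy (hfg x hxT y hy hyT)
  · rw [piecewise_eq_of_notMem _ _ _ hxT, piecewise_eq_of_mem _ _ _ hyT] at hxy
    exact absurd hxy.symm (hfg y hyT x hx hxT)
  · rw [piecewise_eq_of_notMem _ _ _ hxT, piecewise_eq_of_notMem _ _ _ hyT] at hxy
    exact hf hx hy hxy

/-- `j'` holds under `φ₁` the slot that `φ₂` gives to `j`; these steps trace the alternating
paths of the union of the two matchings. -/
def ExchangeStep (A B : Finset α) (φ₁ φ₂ : α → β) (j j' : α) : Prop :=
  j ∈ A ∩ B ∧ j' ∈ A ∪ B ∧ φ₁ j' = φ₂ j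

def ReachesSdiff (A B : Finset α) (φ₁ φ₂ : α → β) (j : α) : Prop :=
  ∃ b ∈ B \ A, ReflTransGen (ExchangeStep A B φ₁ φ₂) j b

variable {A B : Finset α} {φ₁ φ₂ : α → β} {j j' : α}

theorem ExchangeStep.right_unique (h₁ : Set.InjOn φ₁ ↑(A ∪ B)) {j'' : α}
    (h : ExchangeStep A B φ₁ φ₂ j j') (h' : ExchangeStep A B φ₁ φ₂ j j'') : j' = j'' :=
  h₁ h.2.1 h'.2.1 (h.2.2.trans h'.2.2.symm)

theorem ReachesSdiff.of_exchangeStep (hs : ExchangeStep A B φ₁ φ₂ j j')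
    (h : ReachesSdiff A B φ₁ φ₂ j') : ReachesSdiff A B φ₁ φ₂ j :=
  let ⟨b, hb, hj'b⟩ := h
  ⟨b, hb, .head hs hj'b⟩

theorem ReachesSdiff.exchangeStep (h₁ : Set.InjOn φ₁ ↑(A ∪ B)) (hj : j ∈ A)
    (h : ReachesSdiff A B φ₁ φ₂ j) (hs : ExchangeStep A B φ₁ φ₂ j j') :
    ReachesSdiff A B φ₁ φ₂ j' := by
  obtain ⟨b, hb, hjb⟩ := h
  rcases hjb.cases_head with rfl | ⟨c, hjc, hcb⟩
  · exact absurd hj (mem_sdiff.1 hb).2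
  · exact ⟨b, hb, hs.right_unique h₁ hjc ▸ hcb⟩

theorem ReachesSdiff.mem_inter (hj : j ∈ A) (h : ReachesSdiff A B φ₁ φ₂ j) : j ∈ A ∩ B := by
  obtain ⟨b, hb, hjb⟩ := h
  rcases hjb.cases_head with rfl | ⟨c, hjc, -⟩
  · exact absurd hj (mem_sdiff.1 hb).2
  · exact hjc.1

theorem ExchangeStep.mem_left_of_not_reachesSdiff (hs : ExchangeStep A B φ₁ φ₂ j j')
    (hj' : j' ∈ B) (h : ¬ ReachesSdiff A B φ₁ φ₂ j) : j' ∈ A := by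
  by_contra hj'A
  exact h ⟨j', mem_sdiff.2 ⟨hj', hj'A⟩, .single hs⟩

theorem exists_injOn_piecewise_of_injOn_union_of_injOn_inter
    (h₁ : Set.InjOn φ₁ ↑(A ∪ B)) (h₂ : Set.InjOn φ₂ ↑(A ∩ B)) :
    ∃ T ⊆ A ∩ B, Set.InjOn (T.piecewise φ₂ φ₁) ↑A ∧
      Set.InjOn (((A ∩ B) \ T).piecewise φ₂ φ₁) ↑B := by
  classical
  set T := {j ∈ A ∩ B | ReachesSdiff A B φ₁ φ₂ j}
  have hTD : T ⊆ A ∩ B := filter_subset _ _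
  have step {x y : α} (hx : x ∈ A ∩ B) (hy : y ∈ A ∪ B) (hxy : φ₂ x = φ₁ y) :
      ExchangeStep A B φ₁ φ₂ x y :=
    ⟨hx, hy, hxy.symm⟩
  refine ⟨T, hTD, ?_, ?_⟩
  · refine injOn_piecewise (h₁.mono (coe_subset.2 subset_union_left))
      (h₂.mono (coe_subset.2 hTD)) ?_
    intro x hx y hy hyT hxy
    obtain ⟨hxD, hxR⟩ := mem_filter.1 hx
    have hyR := hxR.exchangeStep h₁ (mem_inter.1 hxD).1 (step hxD (mem_union_left B hy) hxy)
    exact hyT (mem_filter.2 ⟨hyR.mem_inter hy, hyR⟩)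
  · refine injOn_piecewise (h₁.mono (coe_subset.2 subset_union_right))
      (h₂.mono (coe_subset.2 sdiff_subset)) ?_
    intro x hx y hy hyT hxy
    obtain ⟨hxD, hxT⟩ := mem_sdiff.1 hx
    have hxR : ¬ ReachesSdiff A B φ₁ φ₂ x := fun h => hxT (mem_filter.2 ⟨hxD, h⟩)
    have hxy' := step hxD (mem_union_right A hy) hxy
    have hyA := hxy'.mem_left_of_not_reachesSdiff hy hxR
    exact hyT (mem_sdiff.2 ⟨mem_inter.2 ⟨hyA, hy⟩,
      fun h => hxR (.of_exchangeStep hxy' (mem_filter.1 h).2)⟩)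

end Exchange

section Cost

variable {α β M : Type*} [AddCommGroup M]

def matchingCost (w : β → α → M) (φ : α → β) (S : Finset α) : M :=
  ∑ j ∈ S, w (φ j) j

variable [DecidableEq α] {w : β → α → M} {φ₁ φ₂ : α → β}

theorem matchingCost_piecewise {S T : Finset α} (hT : T ⊆ S) :
    matchingCost w (T.piecewise φ₂ φ₁) S =
      matchingCost w φ₁ S + ∑ j ∈ T, (w (φ₂ j) j - w (φ₁ j) j) := by
  have hpw : matchingCost w (T.piecewise φ₂ φ₁) S =
      ∑ j ∈ S, T.piecewise (fun j => w (φ₂ j) j) (fun j => w (φ₁ j) j) j :=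
    sum_congr rfl fun j _ => by by_cases hj : j ∈ T <;> simp [hj]
  rw [hpw, sum_piecewise, inter_eq_right.2 hT, matchingCost, ← sum_sdiff hT, sum_sub_distrib]
  abel

theorem matchingCost_exchange {A B T : Finset α} (hT : T ⊆ A ∩ B) :
    matchingCost w (T.piecewise φ₂ φ₁) A + matchingCost w (((A ∩ B) \ T).piecewise φ₂ φ₁) B =
      matchingCost w φ₁ (A ∪ B) + matchingCost w φ₂ (A ∩ B) := by
  have hD : matchingCost w φ₂ (A ∩ B) =
      matchingCost w φ₁ (A ∩ B) + ∑ j ∈ A ∩ B, (w (φ₂ j) j - w (φ₁ j) j) := by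
    rw [sum_sub_distrib, matchingCost, matchingCost]
    abel
  have hU : matchingCost w φ₁ (A ∪ B) + matchingCost w φ₁ (A ∩ B) =
      matchingCost w φ₁ A + matchingCost w φ₁ B :=
    sum_union_inter
  rw [matchingCost_piecewise (hT.trans inter_subset_left),
    matchingCost_piecewise (sdiff_subset.trans inter_subset_right), hD,
    ← sum_sdiff hT, ← add_assoc (matchingCost w φ₁ (A ∪ B)), hU]
  abel

end Cost

def slotCost {n m : ℕ} (p : Fin m → Fin n → ℝ) (s : Fin m × Fin n) (j : Fin n) : ℝ :=
  ((s.2 : ℕ) + 1 : ℝ) * p s.1 j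

section MinMatchingCost

variable {n m : ℕ} (p : Fin m → Fin n → ℝ) (S : Finset (Fin n))

theorem finite_matchingCosts :
    {c : ℝ | ∃ φ : Fin n → Fin m × Fin n, Set.InjOn φ ↑S ∧
      c = matchingCost (slotCost p) φ S}.Finite :=
  (Set.finite_range fun φ => matchingCost (slotCost p) φ S).subset
    fun _ ⟨φ, _, hc⟩ => ⟨φ, hc.symm⟩

theorem minMatchingCost_le {φ : Fin n → Fin m × Fin n} (hφ : Set.InjOn φ ↑S) :
    minMatchingCost p S ≤ matchingCost (slotCost p) φ S :=
  csInf_le (finite_matchingCosts p S).bddBelow ⟨φ, hφ, rfl⟩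

theorem exists_minMatchingCost_eq (hm : 0 < m) :
    ∃ φ : Fin n → Fin m × Fin n, Set.InjOn φ ↑S ∧
      minMatchingCost p S = matchingCost (slotCost p) φ S := by
  have hne : {c : ℝ | ∃ φ : Fin n → Fin m × Fin n, Set.InjOn φ ↑S ∧
      c = matchingCost (slotCost p) φ S}.Nonempty :=
    ⟨_, fun j => (⟨0, hm⟩, j), fun _ _ _ _ h => congrArg Prod.snd h, rfl⟩
  exact hne.csInf_mem (finite_matchingCosts p S)

end MinMatchingCost

theorem minMatchingCost_supermodular_general
    (n m : ℕ) (hm : 0 < m)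
    (p : Fin m → Fin n → ℝ) :
    ∀ A B : Finset (Fin n),
      minMatchingCost p A + minMatchingCost p B ≤
        minMatchingCost p (A ∪ B) + minMatchingCost p (A ∩ B) := by
  intro A B
  obtain ⟨φ₁, hφ₁, hU⟩ := exists_minMatchingCost_eq p (A ∪ B) hm
  obtain ⟨φ₂, hφ₂, hI⟩ := exists_minMatchingCost_eq p (A ∩ B) hm
  obtain ⟨T, hT, hA, hB⟩ := exists_injOn_piecewise_of_injOn_union_of_injOn_inter hφ₁ hφ₂
  calc minMatchingCost p A + minMatchingCost p B
      ≤ matchingCost (slotCost p) (T.piecewise φ₂ φ₁) A +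
          matchingCost (slotCost p) (((A ∩ B) \ T).piecewise φ₂ φ₁) B :=
        add_le_add (minMatchingCost_le p A hA) (minMatchingCost_le p B hB)
    _ = minMatchingCost p (A ∪ B) + minMatchingCost p (A ∩ B) := by
        rw [hU, hI, matchingCost_exchange hT]

/-- the minimum-cost bipartite assignment objective `g` (minimum total
completion time of a non-migratory schedule on unrelated machines) is supermodular as a
set function of the scheduled jobs. -/
theorem minMatchingCost_supermodular
    (n m : ℕ) (hn : 0 < n) (hm : 0 < m)
    (p : Fin m → Fin n → ℝ) (hp : ∀ i j, 0 < p i j) :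
    ∀ A B : Finset (Fin n),
      minMatchingCost p A + minMatchingCost p B ≤
        minMatchingCost p (A ∪ B) + minMatchingCost p (A ∩ B) :=
  minMatchingCost_supermodular_general n m hm p
end
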